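/- For every integer n ≥ 1, every 1 ≤ k ≤ n, and all indices 1 ≤ s < t ≤ k(n−k+1), writing β_s^{i^k} = (p_1, q_1) and β_t^{i^k} = (p_2, q_2) for the enumeration of positive roots associated to the reduced word i^k, one has q_1 ≤ q_2, and if q_1 = q_2 then p_2 < p_1 (i.e. as the index increases within the first k(n−k+1) positions, the second coordinate weakly increases, and for equal second coordinates the first coordinate strictly decreases). -/
import Mathlib


/-- The adjacent transposition `s_i` swapping `i` and `i+1` (as a permutation of `ℕ`,
with 1-based conventions: the relevant generators are `s_1, …, s_n`). -/
def sw (i : ℕ) : Equiv.Perm ℕ := Equiv.swap i (i + 1)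

/-- The product `s_{i_1} ⋯ s_{i_r}` of the adjacent transpositions along a word. -/
def wordProd (w : List ℕ) : Equiv.Perm ℕ := (w.map sw).prod

/-- The longest element `w_0` of `S_{n+1}`: the order-reversing permutation
`i ↦ n+2−i` of `{1,…,n+1}` (extended by the identity outside). -/
def w0 (n : ℕ) : Equiv.Perm ℕ :=
  Function.Involutive.toPerm (fun i => if 1 ≤ i ∧ i ≤ n + 1 then n + 2 - i else i)
    (by intro i; dsimp only; split_ifs <;> omega)

/-- The number of inversions of a permutation of `{1,…,n+1}`. -/
def inversions (n : ℕ) (w : Equiv.Perm ℕ) : ℕ :=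
  ((Finset.Icc 1 (n + 1) ×ˢ Finset.Icc 1 (n + 1)).filter
    (fun p => p.1 < p.2 ∧ w p.2 < w p.1)).card

/-- Part (A) of the word `i^k`: the word
`(k,k−1,…,1, k+1,k,…,2, …, n,n−1,…,n−k+1)` of the permutation `w_{k,n}`. -/
def wordA (n k : ℕ) : List ℕ :=
  ((List.range (n - k + 1)).map (fun m => (List.range k).map (fun t => k + m - t))).flatten

/-- Part (B) of the word `i^k`: the word
`(n,n−1,…,n−k+2, n,n−1,…,n−k+3, …, n,n−1, n)` of the permutation `S_{n−(k−1)+[k−1]}`. -/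
def wordB (n k : ℕ) : List ℕ :=
  ((List.range (k - 1)).map (fun b => (List.range (k - 1 - b)).map (fun t => n - t))).flatten

/-- Part (C) of the word `i^k`: the word
`(1,2,…,n−k, 1,2,…,n−k−1, …, 1,2, 1)` of the permutation `S_{[n−k]}`. -/
def wordC (n k : ℕ) : List ℕ :=
  ((List.range (n - k)).map (fun b => (List.range (n - k - b)).map (fun t => t + 1))).flatten

/-- The reduced word `i^k` for the longest element `w_0`. -/
def ik (n k : ℕ) : List ℕ := wordA n k ++ wordB n k ++ wordC n k

/-- The positive root `β_ℓ^i = s_{i_1}⋯s_{i_{ℓ−1}}(α_{i_ℓ})` (1-based `ℓ`) associated to a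
reduced word `w = (i_1,…,i_N)`, encoded as the pair
`(σ(i_ℓ), σ(i_ℓ+1) − 1)` where `σ = s_{i_1}⋯s_{i_{ℓ−1}}`. -/
def beta (w : List ℕ) (l : ℕ) : ℕ × ℕ :=
  (wordProd (w.take (l - 1)) (w.getD (l - 1) 0),
   wordProd (w.take (l - 1)) (w.getD (l - 1) 0 + 1) - 1)

/-- One block of `wordA`. -/
def blockA (k m : ℕ) : List ℕ := (List.range k).map (fun t => k + m - t)

/-- Concatenation of the first `M` blocks of `wordA`. -/
def gA (k M : ℕ) : List ℕ := ((List.range M).map (blockA k)).flatten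

lemma wordA_eq (n k : ℕ) : wordA n k = gA k (n - k + 1) := rfl

lemma gA_succ (k M : ℕ) : gA k (M + 1) = gA k M ++ blockA k M := by
  simp [gA, List.range_succ]

lemma blockA_length (k m : ℕ) : (blockA k m).length = k := by simp [blockA]

lemma gA_length (k M : ℕ) : (gA k M).length = M * k := by
  induction M with
  | zero => simp [gA]
  | succ M ih => rw [gA_succ]; simp [ih, blockA_length, Nat.succ_mul]

lemma gA_prefix (k : ℕ) : ∀ {m M : ℕ}, m ≤ M → (gA k m) <+: gA k M := by
  intro m M h
  induction M with
  | zero =>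
    have : m = 0 := Nat.le_zero.mp h
    subst this; exact List.prefix_refl _
  | succ M ih =>
    rcases Nat.eq_or_lt_of_le h with h' | h'
    · subst h'; exact List.prefix_refl _
    · rw [gA_succ]
      exact (ih (Nat.lt_succ_iff.mp h')).trans (List.prefix_append _ _)

lemma wordProd_nil (x : ℕ) : wordProd [] x = x := by simp [wordProd]

lemma wordProd_append (a b : List ℕ) (x : ℕ) :
    wordProd (a ++ b) x = wordProd a (wordProd b x) := by
  simp [wordProd, List.map_append, List.prod_append, Equiv.Perm.mul_apply]

/-- The cycle given by the first `t` letters of block `m`. -/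
def cyc (k m t x : ℕ) : ℕ :=
  if x = k + m + 1 - t ∧ 0 < t then k + m + 1
  else if k + m + 1 - t < x ∧ x ≤ k + m + 1 then x - 1 else x

/-- The permutation given by the first `m` full blocks. -/
def sig (k m x : ℕ) : ℕ :=
  if 1 ≤ x ∧ x ≤ m then x + k else if m < x ∧ x ≤ m + k then x - m else x

lemma wordProd_partial (k m : ℕ) :
    ∀ t, t ≤ k → ∀ x, wordProd ((List.range t).map (fun j => k + m - j)) x = cyc k m t x := by
  intro t
  induction t with
  | zero =>
    intro _ x
    simp only [List.range_zero, List.map_nil, wordProd_nil, cyc]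
    split_ifs <;> omega
  | succ t ih =>
    intro ht x
    rw [List.range_succ, List.map_append, wordProd_append]
    have h1 : wordProd (List.map (fun j => k + m - j) [t]) x = sw (k + m - t) x := by
      simp [wordProd]
    rw [h1, ih (Nat.le_of_succ_le ht)]
    simp only [sw, cyc, Equiv.swap_apply_def]
    split_ifs <;> omega

lemma wordProd_gA (k : ℕ) (hk : 1 ≤ k) :
    ∀ m x, wordProd (gA k m) x = sig k m x := by
  intro m
  induction m with
  | zero =>
    intro x
    have h0 : gA k 0 = [] := rfl
    rw [h0, wordProd_nil]
    simp only [sig]; split_ifs <;> omega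
  | succ m ih =>
    intro x
    rw [gA_succ, wordProd_append]
    have hb : wordProd (blockA k m) x = cyc k m k x := by
      have : blockA k m = (List.range k).map (fun j => k + m - j) := rfl
      rw [this, wordProd_partial k m k le_rfl]
    rw [hb, ih]
    simp only [sig, cyc]
    split_ifs <;> omega

lemma take_wordA (n k m t : ℕ) (hm : m < n - k + 1) (ht : t ≤ k) :
    (wordA n k).take (m * k + t) = gA k m ++ (List.range t).map (fun j => k + m - j) := by
  rw [wordA_eq]
  obtain ⟨r, hr⟩ := gA_prefix k (show m + 1 ≤ n - k + 1 from hm)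
  rw [← hr, List.take_append_of_le_length (by rw [gA_length]; nlinarith),
    gA_succ, List.take_append, gA_length,
    List.take_of_length_le (by rw [gA_length]; omega)]
  congr 1
  have h1 : m * k + t - m * k = t := by omega
  rw [h1]
  show ((List.range k).map (fun j => k + m - j)).take t = _
  rw [← List.map_take, List.take_range, Nat.min_eq_left ht]

lemma getD_wordA (n k m t : ℕ) (hm : m < n - k + 1) (ht : t < k) :
    (wordA n k).getD (m * k + t) 0 = k + m - t := by
  rw [wordA_eq]
  obtain ⟨r, hr⟩ := gA_prefix k (show m + 1 ≤ n - k + 1 from hm)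
  rw [← hr, gA_succ, List.append_assoc,
    List.getD_append_right _ _ _ _ (by rw [gA_length]; omega),
    List.getD_append _ _ _ _ (by rw [gA_length, blockA_length]; omega),
    gA_length]
  have h1 : m * k + t - m * k = t := by omega
  rw [h1]
  show ((List.range k).map (fun j => k + m - j)).getD t 0 = _
  rw [List.getD_eq_getElem _ _ (by simpa using ht)]
  simp

lemma wordA_length (n k : ℕ) : (wordA n k).length = (n - k + 1) * k := by
  rw [wordA_eq, gA_length]

lemma sig_cyc_eval1 (k m t : ℕ) (ht : t < k) :
    sig k m (cyc k m t (k + m - t)) = k - t := by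
  simp only [sig, cyc]; split_ifs <;> omega

lemma sig_cyc_eval2 (k m t : ℕ) (ht : t < k) :
    sig k m (cyc k m t (k + m - t + 1)) = k + m + 1 := by
  simp only [sig, cyc]; split_ifs <;> omega

lemma beta_formula (n k m t l : ℕ) (hk : 1 ≤ k) (ht : t < k) (hl : l - 1 = m * k + t)
    (hl1 : 1 ≤ l) (hl2 : l ≤ k * (n - k + 1)) :
    beta (ik n k) l = (k - t, k + m) := by
  have hcm : k * (n - k + 1) = (n - k + 1) * k := Nat.mul_comm _ _
  have hm : m < n - k + 1 := by
    by_contra h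
    have h1 : (n - k + 1) * k ≤ m * k := Nat.mul_le_mul_right k (by omega)
    generalize (n - k + 1) * k = A at h1 hcm
    generalize m * k = B at h1 hl
    omega
  have hlen : l - 1 < (wordA n k).length := by
    rw [wordA_length]
    have h1 : (m + 1) * k ≤ (n - k + 1) * k := Nat.mul_le_mul_right k (by omega)
    have h2 : (m + 1) * k = m * k + k := by ring
    generalize (n - k + 1) * k = A at h1 hcm ⊢
    generalize m * k = B at h1 h2 hl
    omega
  have hik : ik n k = wordA n k ++ (wordB n k ++ wordC n k) := by
    rw [ik, List.append_assoc]
  have htake : (ik n k).take (l - 1) = (wordA n k).take (l - 1) := by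
    rw [hik, List.take_append_of_le_length (le_of_lt hlen)]
  have hgetD : (ik n k).getD (l - 1) 0 = k + m - t := by
    rw [hik, List.getD_append _ _ _ _ hlen, hl, getD_wordA n k m t hm ht]
  have hprod : ∀ x, wordProd ((ik n k).take (l - 1)) x = sig k m (cyc k m t x) := by
    intro x
    rw [htake, hl, take_wordA n k m t hm (le_of_lt ht), wordProd_append,
      wordProd_partial k m t (le_of_lt ht), wordProd_gA k hk]
  simp only [beta, hgetD, hprod, sig_cyc_eval1 k m t ht, sig_cyc_eval2 k m t ht]
  simp
/-- Within the first `k(n−k+1)` positions of the enumeration of positive roots associated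
to `i^k`, writing `β_s^{i^k} = (p_1,q_1)` and `β_t^{i^k} = (p_2,q_2)` with `s < t`, one has
`q_1 ≤ q_2`, and if `q_1 = q_2` then `p_2 < p_1`. -/
theorem ik_initial_segment_order (n k : ℕ) (hn : 1 ≤ n) (hk1 : 1 ≤ k) (hkn : k ≤ n) :
    ∀ s t : ℕ, 1 ≤ s → s < t → t ≤ k * (n - k + 1) →
      (beta (ik n k) s).2 ≤ (beta (ik n k) t).2 ∧
      ((beta (ik n k) s).2 = (beta (ik n k) t).2 →
        (beta (ik n k) t).1 < (beta (ik n k) s).1) := by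
  intro s t hs hst ht
  obtain ⟨q1, r1, hr1, h1⟩ : ∃ q r, r < k ∧ s - 1 = q * k + r :=
    ⟨(s - 1) / k, (s - 1) % k, Nat.mod_lt _ hk1, (Nat.div_add_mod' _ _).symm⟩
  obtain ⟨q2, r2, hr2, h2⟩ : ∃ q r, r < k ∧ t - 1 = q * k + r :=
    ⟨(t - 1) / k, (t - 1) % k, Nat.mod_lt _ hk1, (Nat.div_add_mod' _ _).symm⟩
  rw [beta_formula n k q1 r1 s hk1 hr1 h1 hs (by omega),
    beta_formula n k q2 r2 t hk1 hr2 h2 (by omega) ht]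
  have hq : q1 ≤ q2 := by
    by_contra h
    have hm1 : (q2 + 1) * k ≤ q1 * k := Nat.mul_le_mul_right k (by omega)
    have hm2 : (q2 + 1) * k = q2 * k + k := by ring
    generalize q1 * k = A at hm1 h1
    generalize q2 * k = B at hm1 hm2 h2
    omega
  refine ⟨by simp; omega, ?_⟩
  intro he
  simp only [] at he ⊢
  have hq2 : q1 = q2 := by omega
  subst hq2
  have : r1 < r2 := by
    generalize q1 * k = A at h1 h2
    omega
  omega
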